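/- arXiv:2408.14524 — 8 statements merged into one kernel-verified Lean document; each statement's English description precedes it below -/
import Mathlib

section
/- Let A(x) = x^{l'} + a·x^l + b be a polynomial with integer coefficients, p a prime, and k a natural number. Then there exists a polynomial U(x) with integer coefficients such that A(x^{p^k}) = A(x)^{p^k} + p·A(x)·U(x) + a·x^{l·p^k} + b + (−a·x^l − b)^{p^k}. -/
open Polynomial

/-! With `B = -a Xˡ - b` we have `A + B = X^{l'}`, so `A(X^{p^k}) - a X^{l p^k} - b = (A + B)^{p^k}`,
and the binomial coefficients `(p^k).choose i` with `0 < i < p^k` are all divisible by `p`. -/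

theorem stmt_2_general (a b : ℤ) (l l' : ℕ) (p : ℕ) (hp : p.Prime) (k : ℕ)
    (A : ℤ[X]) (hA : A = X ^ l' + C a * X ^ l + C b) :
    ∃ U : ℤ[X],
      A.comp (X ^ p ^ k) =
        A ^ p ^ k + C (p : ℤ) * A * U + C a * X ^ (l * p ^ k) + C b
          + (-(C a * X ^ l) - C b) ^ p ^ k := by
  set B : ℤ[X] := -(C a * X ^ l) - C b
  obtain ⟨r, hr⟩ := exists_add_pow_prime_pow_eq hp A B k
  refine ⟨B * r, ?_⟩
  have hAB : A + B = X ^ l' := by rw [hA]; ring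
  have hcomp : A.comp (X ^ p ^ k) = (X ^ l') ^ p ^ k + C a * X ^ (l * p ^ k) + C b := by
    simp only [hA, add_comp, mul_comp, C_comp, pow_comp, X_comp, ← pow_mul, mul_comm (p ^ k)]
  rw [hcomp, ← hAB, hr, map_natCast]
  ring

theorem stmt_2 (a b : ℤ) (l l' : ℕ) (hl : l < l') (p : ℕ) (hp : p.Prime) (k : ℕ)
    (A : ℤ[X]) (hA : A = X ^ l' + C a * X ^ l + C b) :
    ∃ U : ℤ[X],
      A.comp (X ^ p ^ k) =
        A ^ p ^ k + C (p : ℤ) * A * U + C a * X ^ (l * p ^ k) + C b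
          + (-(C a * X ^ l) - C b) ^ p ^ k :=
  stmt_2_general a b l l' p hp k A hA
end

section
/- Let p be an odd prime dividing n, with p ∤ a, p ∤ b, p ∤ c. If the polynomial f(x) = x^n + a·x^{n−1} + b·x + c reduced mod p has a repeated root ζ in an algebraic closure of 𝔽_p, then ζ satisfies ζ² + 2āζ + ā·c̄·(b̄)^{−1} = 0 in that algebraic closure, where bars denote images in 𝔽_p. -/
/-!
Since `p ∣ n`, the derivative of `f = x^n + a x^(n-1) + b x + c` is `b - a x^(n-2)` in
characteristic `p`, so a repeated root `ζ` has `a ζ^(n-2) = b`. Writing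
`f(ζ) = ζ^(n-2) (ζ^2 + a ζ) + b ζ + c` and multiplying by `a` eliminates `ζ^(n-2)`, leaving
`b ζ^2 + 2 a b ζ + a c = 0`.
-/

open Polynomial

noncomputable def quadrinomial {R : Type*} [CommRing R] (n : ℕ) (a b c : R) : R[X] :=
  X ^ n + C a * X ^ (n - 1) + C b * X + C c

section Quadrinomial

variable {R : Type*} [CommRing R] {n : ℕ}

theorem quadrinomial_map {S : Type*} [CommRing S] (φ : R →+* S) (a b c : R) :
    (quadrinomial n a b c).map φ = quadrinomial n (φ a) (φ b) (φ c) := by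
  simp [quadrinomial]

theorem eval_quadrinomial (hn : 2 ≤ n) (a b c x : R) :
    (quadrinomial n a b c).eval x = x ^ (n - 2) * (x ^ 2 + a * x) + b * x + c := by
  obtain ⟨m, rfl⟩ := Nat.exists_eq_add_of_le' hn
  simp only [quadrinomial, eval_add, eval_mul, eval_pow, eval_C, eval_X, Nat.add_sub_cancel,
    show m + 2 - 1 = m + 1 from rfl]
  ring

theorem eval_derivative_quadrinomial (hn : 2 ≤ n) (hn0 : (n : R) = 0) (a b c x : R) :
    (derivative (quadrinomial n a b c)).eval x = b - a * x ^ (n - 2) := by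
  obtain ⟨m, rfl⟩ := Nat.exists_eq_add_of_le' hn
  simp only [quadrinomial, derivative_add, derivative_mul, derivative_X_pow, derivative_C,
    derivative_X, eval_add, eval_mul, eval_pow, eval_C, eval_X, eval_one, eval_zero,
    Nat.add_sub_cancel, show m + 2 - 1 = m + 1 from rfl]
  push_cast at hn0 ⊢
  linear_combination (x ^ (m + 1) + a * x ^ m) * hn0

end Quadrinomial

theorem sq_add_two_mul_add_eq_zero_of_isRoot_of_isRoot_derivative {K : Type*} [Field K] {n : ℕ}
    (hn : 2 ≤ n) (hn0 : (n : K) = 0) {a b c x : K} (hb : b ≠ 0)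
    (hroot : (quadrinomial n a b c).IsRoot x)
    (hroot' : (derivative (quadrinomial n a b c)).IsRoot x) :
    x ^ 2 + 2 * a * x + a * c * b⁻¹ = 0 := by
  rw [IsRoot, eval_quadrinomial hn] at hroot
  rw [IsRoot, eval_derivative_quadrinomial hn hn0] at hroot'
  have hquad : b * x ^ 2 + 2 * a * b * x + a * c = 0 := by
    linear_combination a * hroot + (x ^ 2 + a * x) * hroot'
  field_simp
  linear_combination hquad

theorem stmt_4_general (n : ℕ) (hn : 4 < n) (a b c : ℤ) (p : ℕ) [hp : Fact p.Prime]
    (hpn : p ∣ n)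
    (hpb : ¬ (p : ℤ) ∣ b)
    (f : (ZMod p)[X])
    (hf : f = X ^ n + C ((a : ZMod p)) * X ^ (n - 1) + C ((b : ZMod p)) * X + C ((c : ZMod p)))
    (ζ : AlgebraicClosure (ZMod p))
    (hroot : Polynomial.aeval ζ f = 0) (hroot' : Polynomial.aeval ζ (derivative f) = 0) :
    ζ ^ 2 + 2 * algebraMap (ZMod p) (AlgebraicClosure (ZMod p)) (a : ZMod p) * ζ
      + algebraMap (ZMod p) (AlgebraicClosure (ZMod p)) ((a : ZMod p) * (c : ZMod p) * (b : ZMod p)⁻¹)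
      = 0 := by
  set φ := algebraMap (ZMod p) (AlgebraicClosure (ZMod p))
  have hf' : f = quadrinomial n (a : ZMod p) b c := hf
  have hn0 : (n : AlgebraicClosure (ZMod p)) = 0 := (CharP.cast_eq_zero_iff _ p n).mpr hpn
  have hb : φ b ≠ 0 :=
    (map_ne_zero φ).mpr fun h ↦ hpb ((ZMod.intCast_zmod_eq_zero_iff_dvd b p).mp h)
  rw [aeval_def, eval₂_eq_eval_map, hf', quadrinomial_map] at hroot
  rw [aeval_def, eval₂_eq_eval_map, ← derivative_map, hf', quadrinomial_map] at hroot'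
  rw [map_mul, map_mul, map_inv₀]
  exact sq_add_two_mul_add_eq_zero_of_isRoot_of_isRoot_derivative (by omega) hn0 hb hroot hroot'

theorem stmt_4 (n : ℕ) (hn : 4 < n) (a b c : ℤ) (p : ℕ) [hp : Fact p.Prime]
    (hodd : p ≠ 2) (hpn : p ∣ n)
    (hpa : ¬ (p : ℤ) ∣ a) (hpb : ¬ (p : ℤ) ∣ b) (hpc : ¬ (p : ℤ) ∣ c)
    (f : (ZMod p)[X])
    (hf : f = X ^ n + C ((a : ZMod p)) * X ^ (n - 1) + C ((b : ZMod p)) * X + C ((c : ZMod p)))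
    (ζ : AlgebraicClosure (ZMod p))
    (hroot : Polynomial.aeval ζ f = 0) (hroot' : Polynomial.aeval ζ (derivative f) = 0) :
    ζ ^ 2 + 2 * algebraMap (ZMod p) (AlgebraicClosure (ZMod p)) (a : ZMod p) * ζ
      + algebraMap (ZMod p) (AlgebraicClosure (ZMod p)) ((a : ZMod p) * (c : ZMod p) * (b : ZMod p)⁻¹)
      = 0 :=
  stmt_4_general n hn a b c p (hp := hp) hpn hpb f hf ζ hroot hroot'
end

section
/- Let p be an odd prime with p ∤ a, p ∤ b, p | c, and p ∤ (n−1). If a·(−a·(n−2))^{n−2} + b·(n−1)^{n−1} ≢ 0 (mod p), then the polynomial x^n + ā·x^{n−1} + b̄·x is separable over 𝔽_p (has no repeated roots in an algebraic closure of 𝔽_p). -/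
open Polynomial

/-- At a common root `α ≠ 0` of `X ^ (m + 2) + A X ^ (m + 1) + B X` and its derivative,
`α ^ (m + 1) = m B` and `(m + 1) α = -m A`; eliminating `α` gives the conclusion. -/
theorem trinomial_discr_eq_zero_of_double_root {R : Type*} [CommRing R] [IsDomain R] {m : ℕ}
    {A B α : R} (hα : α ≠ 0) (hB : B ≠ 0)
    (hf : α ^ (m + 2) + A * α ^ (m + 1) + B * α = 0)
    (hf' : (m + 2) * α ^ (m + 1) + A * ((m + 1) * α ^ m) + B = 0) :
    A * (-A * m) ^ m + B * (m + 1) ^ (m + 1) = 0 := by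
  have hg : α ^ (m + 1) + A * α ^ m + B = 0 :=
    mul_left_cancel₀ hα (by linear_combination hf)
  have hpow : α ^ (m + 1) = m * B := by linear_combination hf' - ((m : R) + 1) * hg
  have hApow : A * α ^ m = -(m + 1) * B := by linear_combination ((m : R) + 2) * hg - hf'
  have hlin : (m + 1) * α = -A * m :=
    mul_right_cancel₀ hB (by linear_combination α * hApow - A * hpow)
  calc A * (-A * m) ^ m + B * (m + 1) ^ (m + 1)
      = (m + 1) ^ m * (A * α ^ m) + B * (m + 1) ^ (m + 1) := by rw [← hlin, mul_pow]; ring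
    _ = 0 := by linear_combination ((m : R) + 1) ^ m * hApow

theorem separable_X_pow_add_C_mul_X_pow_add_C_mul_X {K : Type*} [Field K] {m : ℕ} (hm : m ≠ 0)
    {A B : K} (hB : B ≠ 0) (hdisc : A * (-A * m) ^ m + B * (m + 1) ^ (m + 1) ≠ 0) :
    (X ^ (m + 2) + C A * X ^ (m + 1) + C B * X : K[X]).Separable := by
  set L := AlgebraicClosure K
  have hinj : Function.Injective (algebraMap K L) := (algebraMap K L).injective
  refine separable_def _ |>.mpr <|
    (isCoprime_iff_aeval_ne_zero_of_isAlgClosed K L _ _).mpr fun α => ?_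
  by_contra! ⟨hf, hf'⟩
  simp only [derivative_mul, derivative_X_pow, derivative_X, derivative_C,
    map_add, map_mul, map_pow, map_natCast, map_ofNat, aeval_X, aeval_C, zero_mul, mul_one,
    zero_add, Nat.cast_add, Nat.cast_ofNat, Nat.cast_one, Nat.add_sub_cancel,
    show m + 2 - 1 = m + 1 from rfl] at hf hf'
  rcases eq_or_ne α 0 with rfl | hα
  · simp [hm] at hf'
    exact hB hf'
  · have hB' : algebraMap K L B ≠ 0 := (_root_.map_ne_zero _).mpr hB
    refine hdisc (hinj ?_)
    simp only [map_add, map_mul, map_pow, map_neg, map_natCast, map_one, map_zero]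
    exact trinomial_discr_eq_zero_of_double_root hα hB' hf hf'

theorem stmt_5_general (n : ℕ) (hn : 4 < n) (a b : ℤ)
    (p : ℕ) [hp : Fact p.Prime]
    (hpb : ¬ (p : ℤ) ∣ b)
    (hsep : ¬ (p : ℤ) ∣ (a * (-a * ((n : ℤ) - 2)) ^ (n - 2) + b * ((n : ℤ) - 1) ^ (n - 1))) :
    (X ^ n + C ((a : ZMod p)) * X ^ (n - 1) + C ((b : ZMod p)) * X : (ZMod p)[X]).Separable := by
  obtain ⟨m, rfl⟩ : ∃ m, n = m + 2 := ⟨n - 2, by omega⟩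
  rw [show m + 2 - 1 = m + 1 by omega]
  rw [show m + 2 - 2 = m by omega, ← ZMod.intCast_zmod_eq_zero_iff_dvd] at hsep
  rw [← ZMod.intCast_zmod_eq_zero_iff_dvd] at hpb
  refine separable_X_pow_add_C_mul_X_pow_add_C_mul_X (by omega) hpb ?_
  push_cast at hsep
  convert hsep using 4 <;> ring

theorem stmt_5 (n : ℕ) (hn : 4 < n) (a b c : ℤ) (habc : a * b * c ≠ 0)
    (p : ℕ) [hp : Fact p.Prime] (hodd : p ≠ 2)
    (hpa : ¬ (p : ℤ) ∣ a) (hpb : ¬ (p : ℤ) ∣ b) (hpc : (p : ℤ) ∣ c)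
    (hpn1 : ¬ (p : ℤ) ∣ ((n : ℤ) - 1))
    (hsep : ¬ (p : ℤ) ∣ (a * (-a * ((n : ℤ) - 2)) ^ (n - 2) + b * ((n : ℤ) - 1) ^ (n - 1))) :
    (X ^ n + C ((a : ZMod p)) * X ^ (n - 1) + C ((b : ZMod p)) * X : (ZMod p)[X]).Separable :=
  stmt_5_general n hn a b p (hp := hp) hpb hsep
end

section
/- Let p be a prime with p ∤ a, p ∤ c, p | b, and p ∤ n. If c·n^n + a·(−a·(n−1))^{n−1} ≢ 0 (mod p), then the polynomial x^n + ā·x^{n−1} + c̄ ∈ 𝔽_p[x] is separable. -/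
/-!
Over a field in which `n ≠ 0`, the derivative of `f = X ^ n + a X ^ (n - 1) + c` is
`n X ^ (n - 2) (X - r)` with `r = -a (n - 1) / n`, so `f` is separable as soon as neither `0` nor
`r` is a root of `f`. Now `f 0 = c`, and `n ^ n f r = c n ^ n + a (-a (n - 1)) ^ (n - 1)`.
-/

open Polynomial

theorem pow_mul_trinomial_of_mul_eq {R : Type*} [CommRing R] {n : ℕ} (hn : n ≠ 0) {a c m r : R}
    (hmr : m * r = -a * (m - 1)) :
    m ^ n * (r ^ n + a * r ^ (n - 1) + c) = c * m ^ n + a * (-a * (m - 1)) ^ (n - 1) := by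
  obtain ⟨k, rfl⟩ := Nat.exists_eq_add_one_of_ne_zero hn
  rw [Nat.add_sub_cancel, ← hmr]
  linear_combination (m * r) ^ k * hmr

theorem derivative_X_pow_add_C_mul_X_pow_add_C {R : Type*} [CommRing R] (k : ℕ) (a c : R) :
    derivative (X ^ (k + 2) + C a * X ^ (k + 1) + C c : R[X])
      = C ((k + 2 : ℕ) : R) * X ^ (k + 1) + C (a * (k + 1)) * X ^ k := by
  simp only [derivative_add, derivative_C_mul, derivative_X_pow, derivative_C, map_mul]
  push_cast
  ring

theorem isCoprime_X_sub_C_of_not_isRoot {K : Type*} [Field K] {f : K[X]} {r : K}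
    (h : ¬ f.IsRoot r) : IsCoprime (X - C r) f :=
  (irreducible_X_sub_C r).coprime_iff_not_dvd.2 (by rwa [dvd_iff_isRoot])

theorem separable_X_pow_add_C_mul_X_pow_sub_one_add_C {K : Type*} [Field K] {n : ℕ}
    (hn : 2 ≤ n) {a c : K} (hn0 : (n : K) ≠ 0) (hc : c ≠ 0)
    (hdisc : c * n ^ n + a * (-a * (n - 1)) ^ (n - 1) ≠ 0) :
    (X ^ n + C a * X ^ (n - 1) + C c).Separable := by
  set r := -a * (n - 1) / n
  have hmr : n * r = -a * (n - 1) := mul_div_cancel₀ _ hn0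
  have hr : ¬ (X ^ n + C a * X ^ (n - 1) + C c).IsRoot r := fun h ↦ hdisc <| by
    have hfr : r ^ n + a * r ^ (n - 1) + c = 0 := by simpa using h
    rw [← pow_mul_trinomial_of_mul_eq (by omega) hmr, hfr, mul_zero]
  have h0 : ¬ (X ^ n + C a * X ^ (n - 1) + C c).IsRoot 0 := by
    simp [hc, show n ≠ 0 by omega, show n - 1 ≠ 0 by omega]
  obtain ⟨k, rfl⟩ := Nat.exists_eq_add_of_le' hn
  rw [show k + 2 - 1 = k + 1 by omega] at hr h0 ⊢
  have hderiv : derivative (X ^ (k + 2) + C a * X ^ (k + 1) + C c)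
      = C ((k + 2 : ℕ) : K) * ((X - C r) * (X - C 0) ^ k) := by
    have ha : a * (k + 1) = -((k + 2 : ℕ) * r) := by rw [hmr]; push_cast; ring
    rw [derivative_X_pow_add_C_mul_X_pow_add_C, ha, map_neg, map_mul]
    simp only [map_zero, sub_zero]
    ring
  rw [separable_def, hderiv, isCoprime_mul_unit_left_right (isUnit_C.2 hn0.isUnit)]
  exact (isCoprime_X_sub_C_of_not_isRoot hr).symm.mul_right
    (isCoprime_X_sub_C_of_not_isRoot h0).symm.pow_right

theorem stmt_7_general (n : ℕ) (hn : 4 < n) (a c : ℤ)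
    (p : ℕ) [hp : Fact p.Prime]
    (hpc : ¬ (p : ℤ) ∣ c) (hpn : ¬ p ∣ n)
    (hsep : ¬ (p : ℤ) ∣ (c * (n : ℤ) ^ n + a * (-a * ((n : ℤ) - 1)) ^ (n - 1))) :
    (X ^ n + C ((a : ZMod p)) * X ^ (n - 1) + C ((c : ZMod p)) : (ZMod p)[X]).Separable := by
  rw [← ZMod.intCast_zmod_eq_zero_iff_dvd] at hpc hsep
  rw [← ZMod.natCast_eq_zero_iff] at hpn
  push_cast at hsep
  exact separable_X_pow_add_C_mul_X_pow_sub_one_add_C (by omega) hpn hpc hsep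

theorem stmt_7 (n : ℕ) (hn : 4 < n) (a b c : ℤ) (habc : a * b * c ≠ 0)
    (p : ℕ) [hp : Fact p.Prime]
    (hpa : ¬ (p : ℤ) ∣ a) (hpc : ¬ (p : ℤ) ∣ c) (hpb : (p : ℤ) ∣ b) (hpn : ¬ p ∣ n)
    (hsep : ¬ (p : ℤ) ∣ (c * (n : ℤ) ^ n + a * (-a * ((n : ℤ) - 1)) ^ (n - 1))) :
    (X ^ n + C ((a : ZMod p)) * X ^ (n - 1) + C ((c : ZMod p)) : (ZMod p)[X]).Separable :=
  stmt_7_general n hn a c p (hp := hp) hpc hpn hsep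
end

section
/- Let p be an odd prime with p ∤ a, p ∤ b, p ∤ c, and p | (n−1). If a·b ≢ c (mod p), then the polynomial x^n + ā·x^{n−1} + b̄·x + c̄ ∈ 𝔽_p[x] is separable. -/
open Polynomial

theorem stmt_8 (n : ℕ) (hn : 4 < n) (a b c : ℤ) (habc : a * b * c ≠ 0)
    (p : ℕ) [hp : Fact p.Prime] (hodd : p ≠ 2)
    (hpa : ¬ (p : ℤ) ∣ a) (hpb : ¬ (p : ℤ) ∣ b) (hpc : ¬ (p : ℤ) ∣ c)
    (hpn1 : (p : ℤ) ∣ ((n : ℤ) - 1))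
    (hab : ¬ (p : ℤ) ∣ (a * b - c)) :
    (X ^ n + C ((a : ZMod p)) * X ^ (n - 1) + C ((b : ZMod p)) * X + C ((c : ZMod p)) :
      (ZMod p)[X]).Separable := by
  obtain ⟨k, rfl⟩ : ∃ k, n = k + 1 := ⟨n - 1, by omega⟩
  have hk : ((k : ℤ) : ZMod p) = 0 := by
    have : (p : ℤ) ∣ (k : ℤ) := by
      have h := hpn1
      have e : ((k + 1 : ℕ) : ℤ) - 1 = (k : ℤ) := by push_cast; ring
      rwa [e] at h
    exact_mod_cast (ZMod.intCast_zmod_eq_zero_iff_dvd _ _).mpr this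
  have hk' : ((k : ℕ) : ZMod p) = 0 := by exact_mod_cast hk
  have hcab : ((c : ZMod p) - (a : ZMod p) * (b : ZMod p)) ≠ 0 := by
    intro h
    apply hab
    have h2 : (((a * b - c : ℤ)) : ZMod p) = 0 := by push_cast; linear_combination -h
    exact (ZMod.intCast_zmod_eq_zero_iff_dvd _ _).mp h2
  set f : (ZMod p)[X] := X ^ (k+1) + C ((a : ZMod p)) * X ^ (k+1 - 1) + C ((b : ZMod p)) * X + C ((c : ZMod p)) with hf
  have hd : derivative f = X ^ k + C ((b : ZMod p)) := by
    simp only [hf, derivative_add, derivative_mul, derivative_C, derivative_X,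
      derivative_X_pow, Nat.add_sub_cancel]
    push_cast
    ring_nf
    rw [hk']
    simp
  rw [Polynomial.Separable, hd]
  refine ⟨C ((c : ZMod p) - (a : ZMod p) * (b : ZMod p))⁻¹,
    -C ((c : ZMod p) - (a : ZMod p) * (b : ZMod p))⁻¹ * (X + C ((a : ZMod p))), ?_⟩
  have key : f - (X + C ((a : ZMod p))) * (X ^ k + C ((b : ZMod p)))
      = C ((c : ZMod p) - (a : ZMod p) * (b : ZMod p)) := by
    simp only [hf, Nat.add_sub_cancel, map_sub, map_mul]
    ring
  have : C ((c : ZMod p) - (a : ZMod p) * (b : ZMod p))⁻¹ *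
      C ((c : ZMod p) - (a : ZMod p) * (b : ZMod p)) = 1 := by
    rw [← map_mul, inv_mul_cancel₀ hcab, map_one]
  linear_combination (C ((c : ZMod p) - (a : ZMod p) * (b : ZMod p))⁻¹) * key + this
end

section
/- Let p be an odd prime with p ∤ a, p ∤ b, p ∤ c, p | (n−1), and a·b ≡ c (mod p). Write n − 1 = p^{r₀}·m₀ with p ∤ m₀. Then over 𝔽_p, the polynomial x^n + ā·x^{n−1} + b̄·x + c̄ factors as (x + ā)·(x^{m₀} + b̄)^{p^{r₀}}. -/
open Polynomial

theorem stmt_9 (n : ℕ) (hn : 4 < n) (a b c : ℤ) (habc : a * b * c ≠ 0)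
    (p : ℕ) [hp : Fact p.Prime] (hodd : p ≠ 2)
    (hpa : ¬ (p : ℤ) ∣ a) (hpb : ¬ (p : ℤ) ∣ b) (hpc : ¬ (p : ℤ) ∣ c)
    (hab : (p : ℤ) ∣ (a * b - c))
    (r₀ m₀ : ℕ) (hr₀ : 1 ≤ r₀) (hm₀ : ¬ p ∣ m₀) (hn1 : n - 1 = p ^ r₀ * m₀) :
    (X ^ n + C ((a : ZMod p)) * X ^ (n - 1) + C ((b : ZMod p)) * X + C ((c : ZMod p)) :
        (ZMod p)[X]) =
      (X + C ((a : ZMod p))) * (X ^ m₀ + C ((b : ZMod p))) ^ p ^ r₀ := by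
  have hb : ∀ k, ((b : ZMod p)) ^ p ^ k = (b : ZMod p) := by
    intro k
    induction k with
    | zero => simp
    | succ k ih => rw [pow_succ, pow_mul, ih, ZMod.pow_card]
  have h1 : ((X ^ m₀ + C ((b : ZMod p)) : (ZMod p)[X])) ^ p ^ r₀
      = X ^ (n - 1) + C ((b : ZMod p)) := by
    rw [add_pow_char_pow, ← pow_mul, ← C_pow, hb r₀, hn1, mul_comm]
  have hc : C ((c : ZMod p)) = C ((a : ZMod p)) * C ((b : ZMod p)) := by
    rw [← C_mul]
    congr 1
    have : ((a * b - c : ℤ) : ZMod p) = 0 := by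
      rwa [ZMod.intCast_zmod_eq_zero_iff_dvd]
    push_cast at this
    linear_combination -this
  have hx : (X : (ZMod p)[X]) ^ n = X ^ (n - 1) * X := by
    rw [← pow_succ]
    congr 1
    omega
  rw [h1, hc, hx]
  ring
end

section
/- Let θ be an algebraic integer with minimal polynomial f(x) = x^n + a_{n−1}x^{n−1} + ⋯ + a₁x + a₀ over ℚ, where n ≥ 2, and let K = ℚ(θ) with ring of integers O_K. If a prime p divides a_i for all i = 0, 1, …, n−1, then p does not divide the index [O_K : ℤ[θ]] if and only if p² does not divide a₀. -/
/-!
`p` divides the index of `ℤ[θ]` in `𝓞 K` (a finite group, as both lattices have rank `n`) iff some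
`z ∉ ℤ[θ]` has `p z ∈ ℤ[θ]`. If `p² ∤ a₀` the minimal polynomial is `p`-Eisenstein, and then
`p z ∈ ℤ[θ]` forces `z ∈ ℤ[θ]` for integral `z`. If `a₀ = p² d` and `a₁ = p b`, write
`f = X (X h + a₁) + a₀` and `G = θ h(θ) + a₁`, so that `θ G = -a₀`. Then `z = G / p` satisfies
`z² = b z - d h(θ)`, so it is integral, but `p z = G` has coordinate `1` at `θⁿ⁻¹`, so `z ∉ ℤ[θ]`.
-/

open Polynomial

namespace AddSubgroup

variable {G : Type*} [AddCommGroup G] {H : AddSubgroup G} {p : ℕ}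

theorem prime_dvd_index_of_nsmul_mem (hp : p.Prime) {g : G} (hg : g ∉ H) (hpg : p • g ∈ H) :
    p ∣ H.index := by
  have : Fact p.Prime := ⟨hp⟩
  have hne : (g : G ⧸ H) ≠ 0 := by rwa [Ne, QuotientAddGroup.eq_zero_iff]
  have hord : addOrderOf (g : G ⧸ H) = p := by
    refine addOrderOf_eq_prime ?_ hne
    rwa [← QuotientAddGroup.mk_nsmul, QuotientAddGroup.eq_zero_iff]
  exact index_eq_card H ▸ hord ▸ _root_.addOrderOf_dvd_natCard _

theorem exists_notMem_nsmul_mem_of_prime_dvd_index [H.FiniteIndex] (hp : p.Prime)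
    (h : p ∣ H.index) : ∃ g ∉ H, p • g ∈ H := by
  have : Fact p.Prime := ⟨hp⟩
  have : Finite (G ⧸ H) := H.finite_quotient_of_finiteIndex
  rw [index_eq_card] at h
  obtain ⟨x, hx⟩ := exists_prime_addOrderOf_dvd_card' p h
  obtain ⟨g, rfl⟩ := QuotientAddGroup.mk_surjective x
  refine ⟨g, fun hg => hp.ne_one ?_, ?_⟩
  · rwa [(QuotientAddGroup.eq_zero_iff g).2 hg, addOrderOf_zero, eq_comm] at hx
  · rw [← QuotientAddGroup.eq_zero_iff, QuotientAddGroup.mk_nsmul, ← hx]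
    exact addOrderOf_nsmul_eq_zero _

theorem prime_dvd_index_iff [H.FiniteIndex] (hp : p.Prime) :
    p ∣ H.index ↔ ∃ g ∉ H, p • g ∈ H :=
  ⟨exists_notMem_nsmul_mem_of_prime_dvd_index hp,
    fun ⟨_, hg, hpg⟩ => prime_dvd_index_of_nsmul_mem hp hg hpg⟩

end AddSubgroup

namespace Polynomial

variable {R : Type*} [Semiring R] (n : ℕ) (a : ℕ → R)

theorem coeff_X_pow_add_sum_C_mul_X_pow {i : ℕ} (hi : i < n) :
    (X ^ n + ∑ j ∈ Finset.range n, C (a j) * X ^ j).coeff i = a i := by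
  simp [coeff_X_pow, hi.ne, hi]

theorem natDegree_X_pow_add_sum_C_mul_X_pow [Nontrivial R] :
    (X ^ n + ∑ j ∈ Finset.range n, C (a j) * X ^ j).natDegree = n := by
  rw [natDegree_add_eq_left_of_degree_lt, natDegree_X_pow]
  rw [degree_X_pow, ← Fin.sum_univ_eq_sum_range (fun j => C (a j) * X ^ j)]
  exact degree_sum_fin_lt _

end Polynomial

theorem IsIntegral.of_sq_eq_smul_add {R A : Type*} [CommRing R] [Nontrivial R] [CommRing A]
    [Algebra R A] {x y : A} (b : R) (hy : IsIntegral R y) (h : x ^ 2 = b • x + y) :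
    IsIntegral R x := by
  have hdeg : (C b * X).degree < (X ^ 2 : R[X]).degree :=
    (degree_C_mul_X_le b).trans_lt (by rw [degree_X_pow]; norm_num)
  refine .of_aeval_monic (monic_X_pow_sub (by rwa [degree_X_pow] at hdeg)) ?_ ?_
  · rw [natDegree_eq_of_degree_eq (degree_sub_eq_left_of_degree_lt hdeg), natDegree_X_pow]
    norm_num
  · simpa [h, Algebra.smul_def] using hy

theorem Algebra.mem_adjoin_singleton_map_iff {R A B : Type*} [CommSemiring R] [Semiring A]
    [Semiring B] [Algebra R A] [Algebra R B] {φ : A →ₐ[R] B} (hφ : Function.Injective φ)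
    {a x : A} : φ x ∈ adjoin R {φ a} ↔ x ∈ adjoin R {a} := by
  rw [← Set.image_singleton, ← AlgHom.map_adjoin, Subalgebra.mem_map]
  exact ⟨fun ⟨y, hy, e⟩ => hφ e ▸ hy, fun h => ⟨x, h, rfl⟩⟩

theorem dvd_coeff_of_smul_eq_aeval {S : Type*} [CommRing S] [IsDomain S]
    [Module.IsTorsionFree ℤ S] {θ : S} (hθ : IsIntegral ℤ θ) {r : ℤ} {g : ℤ[X]}
    (hg : g.natDegree < (minpoly ℤ θ).natDegree) {v : S} (hv : v ∈ Algebra.adjoin ℤ {θ})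
    (h : r • v = aeval θ g) (i : ℕ) : r ∣ g.coeff i := by
  obtain ⟨Q, rfl⟩ := Algebra.adjoin_singleton_eq_range_aeval ℤ θ ▸ hv
  set m := minpoly ℤ θ
  have hQ : aeval θ (Q %ₘ m) = aeval θ Q :=
    aeval_modByMonic_eq_self_of_root (minpoly.aeval ℤ θ)
  have hdvd : m ∣ g - C r * (Q %ₘ m) :=
    minpoly.isIntegrallyClosed_dvd hθ (by simp [hQ, ← h, zsmul_eq_mul])
  have hlt : (g - C r * (Q %ₘ m)).natDegree < m.natDegree := by
    refine (natDegree_sub_le _ _).trans_lt (max_lt hg ((natDegree_C_mul_le _ _).trans_lt ?_))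
    exact natDegree_modByMonic_lt _ (minpoly.monic hθ) (minpoly.ne_one ℤ θ)
  rw [sub_eq_zero.mp (eq_zero_of_dvd_of_natDegree_lt hdvd hlt), coeff_C_mul]
  exact dvd_mul_right _ _

namespace NumberField.RingOfIntegers

variable {K : Type*} [Field K] {θ : 𝓞 K} {p : ℤ}

theorem coe_mem_adjoin_singleton_iff {z : 𝓞 K} :
    (z : K) ∈ Algebra.adjoin ℤ {(θ : K)} ↔ z ∈ Algebra.adjoin ℤ {θ} :=
  Algebra.mem_adjoin_singleton_map_iff (φ := IsScalarTower.toAlgHom ℤ (𝓞 K) K) coe_injective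

variable [NumberField K]

theorem finiteIndex_adjoin_singleton (hgen : Algebra.adjoin ℚ {(θ : K)} = ⊤) :
    (Algebra.adjoin ℤ {θ}).toSubring.toAddSubgroup.FiniteIndex := by
  have hrank : Module.finrank ℤ (Subalgebra.toSubmodule (Algebra.adjoin ℤ {θ})) =
      Module.finrank ℤ (𝓞 K) := by
    rw [Subalgebra.finrank_toSubmodule, (Algebra.adjoin.powerBasis' θ.isIntegral).finrank,
      Algebra.adjoin.powerBasis'_dim, RingOfIntegers.rank,
      (PowerBasis.ofAdjoinEqTop (Algebra.IsIntegral.isIntegral _) hgen).finrank,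
      PowerBasis.ofAdjoinEqTop_dim,
      minpoly.isIntegrallyClosed_eq_field_fractions' ℚ (isIntegral_coe θ),
      (minpoly.monic (isIntegral_coe θ)).natDegree_map, minpoly_coe]
  have := Submodule.finiteQuotientOfFreeOfRankEq _ hrank
  exact @AddSubgroup.finiteIndex_of_finite_quotient _ _ _ this

theorem mem_adjoin_of_smul_mem_adjoin (hgen : Algebra.adjoin ℚ {(θ : K)} = ⊤) (hp : Prime p)
    (hpf : ∀ i < (minpoly ℤ θ).natDegree, p ∣ (minpoly ℤ θ).coeff i)
    (hsq : ¬ p ^ 2 ∣ (minpoly ℤ θ).coeff 0) {z : 𝓞 K} (hz : p • z ∈ Algebra.adjoin ℤ {θ}) :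
    z ∈ Algebra.adjoin ℤ {θ} := by
  have hei : (minpoly ℤ (θ : K)).IsEisensteinAt (Submodule.span ℤ {p}) := by
    rw [minpoly_coe]
    refine (minpoly.monic θ.isIntegral).isEisensteinAt_of_mem_of_notMem ?_
      (fun hi => Ideal.mem_span_singleton.mpr (hpf _ hi)) ?_
    · exact Ideal.span_singleton_eq_top.not.mpr hp.not_isUnit
    · rwa [Ideal.span_singleton_pow, Ideal.mem_span_singleton]
  rw [← coe_mem_adjoin_singleton_iff] at hz ⊢
  exact mem_adjoin_of_smul_prime_smul_of_minpoly_isEisensteinAt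
    (B := .ofAdjoinEqTop (Algebra.IsIntegral.isIntegral _) hgen) hp (isIntegral_coe θ)
    (isIntegral_coe z) (by simpa using hz) hei

theorem exists_notMem_adjoin_smul_mem (hp : Prime p) (hn : 2 ≤ (minpoly ℤ θ).natDegree)
    (hpf : ∀ i < (minpoly ℤ θ).natDegree, p ∣ (minpoly ℤ θ).coeff i)
    (hsq : p ^ 2 ∣ (minpoly ℤ θ).coeff 0) :
    ∃ z ∉ Algebra.adjoin ℤ {θ}, p • z ∈ Algebra.adjoin ℤ {θ} := by
  set f := minpoly ℤ θ
  obtain ⟨b, hb⟩ := hpf 1 (by omega)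
  obtain ⟨d, hd⟩ := hsq
  set G := aeval θ (divX f)
  set η := aeval θ (divX (divX f))
  have hG : G = θ * η + p * b := by
    simpa [coeff_divX, hb, G, η] using congrArg (aeval θ) (X_mul_divX_add (divX f)).symm
  have hθG : θ * G + p ^ 2 * d = 0 := by
    simpa [hd, f] using congrArg (aeval θ) (X_mul_divX_add f)
  have key : (G : K) ^ 2 = p * b * G - p ^ 2 * d * η := by
    have : G ^ 2 = p * b * G - p ^ 2 * d * η := by linear_combination G * hG + η * hθG
    simpa using congrArg (algebraMap (𝓞 K) K) this
  have hp0 : (p : K) ≠ 0 := Int.cast_ne_zero.mpr hp.ne_zero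
  set zK : K := G / p
  have hzK : zK ^ 2 = b • zK + ((-(d * η) : 𝓞 K) : K) := by
    simp only [zK, zsmul_eq_mul, coe_eq_algebraMap, map_neg, map_mul, map_intCast]
    field_simp
    linear_combination key
  let z : 𝓞 K := ⟨zK, .of_sq_eq_smul_add b (isIntegral_coe _) hzK⟩
  have hpz : p • z = G := coe_injective <| by
    rw [map_zsmul, zsmul_eq_mul]
    exact mul_div_cancel₀ _ hp0
  refine ⟨z, fun hz => ?_, hpz ▸ aeval_mem_adjoin_singleton ℤ θ⟩
  have hdeg : (divX f).natDegree < f.natDegree := by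
    rw [natDegree_divX_eq_natDegree_tsub_one]; omega
  have := dvd_coeff_of_smul_eq_aeval θ.isIntegral hdeg hz hpz (f.natDegree - 1)
  rw [coeff_divX, Nat.sub_add_cancel (by omega), (minpoly.monic θ.isIntegral).coeff_natDegree]
    at this
  exact hp.not_isUnit (isUnit_of_dvd_one this)

theorem exists_notMem_adjoin_smul_mem_iff (hgen : Algebra.adjoin ℚ {(θ : K)} = ⊤)
    (hp : Prime p) (hn : 2 ≤ (minpoly ℤ θ).natDegree)
    (hpf : ∀ i < (minpoly ℤ θ).natDegree, p ∣ (minpoly ℤ θ).coeff i) :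
    (∃ z ∉ Algebra.adjoin ℤ {θ}, p • z ∈ Algebra.adjoin ℤ {θ}) ↔
      p ^ 2 ∣ (minpoly ℤ θ).coeff 0 :=
  ⟨fun ⟨_, hz, hpz⟩ =>
    by_contra fun hsq => hz (mem_adjoin_of_smul_mem_adjoin hgen hp hpf hsq hpz),
    exists_notMem_adjoin_smul_mem hp hn hpf⟩

theorem prime_dvd_index_adjoin_iff {q : ℕ} (hgen : Algebra.adjoin ℚ {(θ : K)} = ⊤)
    (hq : q.Prime) (hn : 2 ≤ (minpoly ℤ θ).natDegree)
    (hqf : ∀ i < (minpoly ℤ θ).natDegree, (q : ℤ) ∣ (minpoly ℤ θ).coeff i) :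
    q ∣ (Algebra.adjoin ℤ {θ}).toSubring.toAddSubgroup.index ↔
      (q : ℤ) ^ 2 ∣ (minpoly ℤ θ).coeff 0 := by
  have := finiteIndex_adjoin_singleton hgen
  rw [AddSubgroup.prime_dvd_index_iff hq,
    ← exists_notMem_adjoin_smul_mem_iff hgen (Nat.prime_iff_prime_int.mp hq) hn hqf]
  simp

end NumberField.RingOfIntegers

theorem stmt_12 (K : Type*) [Field K] [NumberField K]
    (θ : NumberField.RingOfIntegers K)
    (n : ℕ) (hn : 2 ≤ n) (a : ℕ → ℤ)
    (f : ℤ[X]) (hf : f = X ^ n + ∑ i ∈ Finset.range n, C (a i) * X ^ i)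
    (hmin : minpoly ℤ θ = f)
    (hgen : Algebra.adjoin ℚ {(θ : K)} = ⊤)
    (p : ℕ) (hp : p.Prime) (hpa : ∀ i < n, (p : ℤ) ∣ a i) :
    ¬ p ∣ ((Algebra.adjoin ℤ {θ}).toSubring.toAddSubgroup.index) ↔
      ¬ ((p : ℤ) ^ 2 ∣ a 0) := by
  subst hf
  have hdeg : (minpoly ℤ θ).natDegree = n := hmin ▸ natDegree_X_pow_add_sum_C_mul_X_pow n a
  have hcoeff : ∀ i < n, (minpoly ℤ θ).coeff i = a i :=
    fun i hi => hmin ▸ coeff_X_pow_add_sum_C_mul_X_pow n a hi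
  have hpf : ∀ i < (minpoly ℤ θ).natDegree, (p : ℤ) ∣ (minpoly ℤ θ).coeff i := by
    rw [hdeg]
    exact fun i hi => hcoeff i hi ▸ hpa i hi
  rw [not_iff_not, NumberField.RingOfIntegers.prime_dvd_index_adjoin_iff hgen hp (hdeg ▸ hn) hpf,
    hcoeff 0 (by omega)]
end

section
/- Let p be a prime with p | a, p | b, p ∤ c, and suppose p | n with n = p^r·m, p ∤ m. Let b = p·b₁ and c₁ = (c + (−c)^{p^r})/p (which is an integer). If either (p | b₁ and p ∤ c₁) or p ∤ b₁·((−c₁)^n + c·b₁^n), then the linear polynomial b̄₁·x + c̄₁ ∈ 𝔽_p[x] is coprime to x^n + c̄ ∈ 𝔽_p[x]. -/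
open Polynomial

theorem stmt_15 (n : ℕ) (hn : 4 < n) (a b c : ℤ)
    (p : ℕ) [hp : Fact p.Prime]
    (hpa : (p : ℤ) ∣ a) (hpb : (p : ℤ) ∣ b) (hpc : ¬ (p : ℤ) ∣ c)
    (r m : ℕ) (hr : 1 ≤ r) (hm : ¬ p ∣ m) (hnrm : n = p ^ r * m)
    (b₁ c₁ : ℤ) (hb₁ : b = (p : ℤ) * b₁) (hc₁ : (p : ℤ) * c₁ = c + (-c) ^ p ^ r)
    (hcond : ((p : ℤ) ∣ b₁ ∧ ¬ (p : ℤ) ∣ c₁) ∨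
      ¬ (p : ℤ) ∣ b₁ * ((-c₁) ^ n + c * b₁ ^ n)) :
    IsCoprime (C ((b₁ : ZMod p)) * X + C ((c₁ : ZMod p)))
      (X ^ n + C ((c : ZMod p)) : (ZMod p)[X]) := by
  by_cases hb : (b₁ : ZMod p) = 0
  · -- b₁ ≡ 0 mod p; then the right disjunct fails, so c₁ ≢ 0
    have hpb₁ : (p : ℤ) ∣ b₁ := (ZMod.intCast_zmod_eq_zero_iff_dvd _ _).1 hb
    have hc : (c₁ : ZMod p) ≠ 0 := by
      rcases hcond with ⟨_, h⟩ | h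
      · exact fun h0 => h ((ZMod.intCast_zmod_eq_zero_iff_dvd _ _).1 h0)
      · exact absurd (hpb₁.mul_right _) h
    rw [hb, map_zero, zero_mul, zero_add]
    have hu : IsUnit (C ((c₁ : ZMod p))) := isUnit_C.2 hc.isUnit
    obtain ⟨u, hu⟩ := hu
    exact ⟨(↑u⁻¹ : (ZMod p)[X]), 0, by simp [hu.symm, ← Units.val_mul]⟩
  · have hdeg : (C ((b₁ : ZMod p)) * X + C ((c₁ : ZMod p))).degree = 1 := by
      rw [degree_add_eq_left_of_degree_lt, degree_C_mul_X hb]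
      · rw [degree_C_mul_X hb]
        exact lt_of_le_of_lt (degree_C_le) (by norm_num)
    have hirr := irreducible_of_degree_eq_one hdeg
    rw [hirr.coprime_iff_not_dvd]
    intro hdvd
    set t : ZMod p := -(c₁ : ZMod p) / (b₁ : ZMod p) with ht
    have hroot : (C ((b₁ : ZMod p)) * X + C ((c₁ : ZMod p))).eval t = 0 := by
      simp only [eval_add, eval_mul, eval_C, eval_X, ht]
      rw [mul_div_assoc', mul_div_cancel_left₀ _ hb]
      ring
    have h2 : (X ^ n + C ((c : ZMod p)) : (ZMod p)[X]).eval t = 0 := by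
      obtain ⟨q, hq⟩ := hdvd
      rw [hq, eval_mul, hroot, zero_mul]
    have h3 : t ^ n + (c : ZMod p) = 0 := by simpa using h2
    -- multiply by b₁^n
    have h4 : (-(c₁ : ZMod p)) ^ n + (c : ZMod p) * (b₁ : ZMod p) ^ n = 0 := by
      have := congrArg (· * (b₁ : ZMod p) ^ n) h3
      simp only [add_mul, zero_mul] at this
      rw [ht, div_pow, div_mul_cancel₀ _ (pow_ne_zero n hb)] at this
      linear_combination this
    rcases hcond with ⟨h, _⟩ | h
    · exact hb ((ZMod.intCast_zmod_eq_zero_iff_dvd _ _).2 h)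
    · apply h
      rw [← ZMod.intCast_zmod_eq_zero_iff_dvd]
      push_cast
      rw [h4, mul_zero]
end
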